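/- Fix integers k ≥ 1 and M ≥ 1, and reals σ_w² > 0, ζ > 0, and positive shifts s₁,…,s_M > 0. For each m ∈ {1,…,M} and z ≥ 0 let Λ_m(z) = e^{s_m/ζ}·(∫_{σ_w²+s_m}^∞ v^{-k} e^{-z/v} e^{-v/ζ} dv)/(∫_{σ_w²}^∞ v^{-k} e^{-z/v} e^{-v/ζ} dv). Then the function (z₁,…,z_M) ↦ ∏_{m=1}^M Λ_m(z_m) on [0,∞)^M is strictly increasing in each coordinate. -/

import Mathlib

/-! Since `exp (-(t + δ) / v) = exp (-t / v) * exp (-δ / v)`, raising `t` by `δ > 0` tilts the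
mixture integrand by the weight `v ↦ exp (-δ / v)`, which is strictly increasing on `v > 0`.
Tilting by an increasing weight moves mass towards large `v`: with `c` the weight at
`b = σ_w² + s`, the mass on `(σ_w², b]` grows by a factor at most `c` and the mass on `(b, ∞)`
by a factor more than `c`, so the share of the tail `(b, ∞)` in `(σ_w², ∞)` strictly increases.
All factors `Λ_m` being positive, the product is then strictly increasing in each coordinate. -/

open MeasureTheory Set Real

lemma setIntegral_pos_of_forall_pos {X : Type*} [MeasurableSpace X] {μ : Measure X} {S : Set X}
    {g : X → ℝ} (hS : MeasurableSet S) (hμ : μ S ≠ 0) (hg : IntegrableOn g S μ)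
    (hpos : ∀ x ∈ S, 0 < g x) : 0 < ∫ x in S, g x ∂μ := by
  rw [setIntegral_pos_iff_support_of_nonneg_ae
    ((ae_restrict_iff' hS).2 (.of_forall fun x hx => (hpos x hx).le)) hg]
  exact (pos_iff_ne_zero.2 hμ).trans_le (measure_mono fun x hx => ⟨(hpos x hx).ne', hx⟩)

lemma div_add_lt_div_add_of_le_mul_of_mul_lt {B N B' N' c : ℝ} (hB : 0 < B) (hN : 0 ≤ N)
    (hB' : 0 ≤ B') (hBB' : B' ≤ c * B) (hNN' : c * N < N') :
    N / (B + N) < N' / (B' + N') := by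
  have hc : 0 ≤ c := nonneg_of_mul_nonneg_left (hB'.trans hBB') hB
  have hN' : 0 < N' := (mul_nonneg hc hN).trans_lt hNN'
  rw [div_lt_div_iff₀ (by positivity) (by positivity)]
  nlinarith [mul_le_mul_of_nonneg_left hBB' hN, mul_lt_mul_of_pos_right hNN' hB]

theorem setIntegral_Ioi_div_lt_of_strictMonoOn {a b : ℝ} (hab : a < b) {f w : ℝ → ℝ}
    (hf : IntegrableOn f (Ioi a)) (hfw : IntegrableOn (fun v => f v * w v) (Ioi a))
    (hf_pos : ∀ v ∈ Ioi a, 0 < f v) (hw_pos : ∀ v ∈ Ioi a, 0 < w v)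
    (hw : StrictMonoOn w (Ioi a)) :
    (∫ v in Ioi b, f v) / (∫ v in Ioi a, f v) <
      (∫ v in Ioi b, f v * w v) / ∫ v in Ioi a, f v * w v := by
  have hb : b ∈ Ioi a := hab
  have hIoc : Ioc a b ⊆ Ioi a := Ioc_subset_Ioi_self
  have hIoi : Ioi b ⊆ Ioi a := Ioi_subset_Ioi hab.le
  have split : ∀ g : ℝ → ℝ, IntegrableOn g (Ioi a) →
      ∫ v in Ioi a, g v = (∫ v in Ioc a b, g v) + ∫ v in Ioi b, g v := fun g hg => by
    rw [← Ioc_union_Ioi_eq_Ioi hab.le, setIntegral_union (Ioc_disjoint_Ioi le_rfl)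
      measurableSet_Ioi (hg.mono_set hIoc) (hg.mono_set hIoi)]
  set c := w b
  have head_le : ∫ v in Ioc a b, f v * w v ≤ c * ∫ v in Ioc a b, f v := by
    rw [← integral_const_mul]
    refine setIntegral_mono_on (hfw.mono_set hIoc) ((hf.mono_set hIoc).const_mul c)
      measurableSet_Ioc fun v hv => ?_
    rw [mul_comm c]
    exact mul_le_mul_of_nonneg_left (hw.monotoneOn (hIoc hv) hb hv.2) (hf_pos v (hIoc hv)).le
  have tail_gt : c * ∫ v in Ioi b, f v < ∫ v in Ioi b, f v * w v := by
    have hfw' := hfw.mono_set hIoi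
    have hcf := (hf.mono_set hIoi).const_mul c
    rw [← sub_pos, ← integral_const_mul, ← integral_sub hfw' hcf]
    refine setIntegral_pos_of_forall_pos measurableSet_Ioi (by simp) (hfw'.sub hcf) fun v hv => ?_
    rw [sub_pos, mul_comm c]
    exact mul_lt_mul_of_pos_left (hw hb (hIoi hv) hv) (hf_pos v (hIoi hv))
  rw [split f hf, split _ hfw]
  refine div_add_lt_div_add_of_le_mul_of_mul_lt ?_ ?_ ?_ head_le tail_gt
  · exact setIntegral_pos_of_forall_pos measurableSet_Ioc (by simp [hab])
      (hf.mono_set hIoc) fun v hv => hf_pos v (hIoc hv)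
  · exact setIntegral_nonneg measurableSet_Ioi fun v hv => (hf_pos v (hIoi hv)).le
  · exact setIntegral_nonneg measurableSet_Ioc fun v hv =>
      (mul_pos (hf_pos v (hIoc hv)) (hw_pos v (hIoc hv))).le

noncomputable def mixtureIntegrand (k : ℕ) (ζ t v : ℝ) : ℝ :=
  (v ^ k)⁻¹ * exp (-t / v) * exp (-v / ζ)

noncomputable def likelihoodRatio (k : ℕ) (σw2 ζ s z : ℝ) : ℝ :=
  exp (s / ζ) * (∫ v in Ioi (σw2 + s), mixtureIntegrand k ζ z v) /
    ∫ v in Ioi σw2, mixtureIntegrand k ζ z v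

section mixtureIntegrand

variable {k : ℕ} {ζ t : ℝ}

lemma mixtureIntegrand_pos {v : ℝ} (hv : 0 < v) : 0 < mixtureIntegrand k ζ t v := by
  unfold mixtureIntegrand
  positivity

lemma mixtureIntegrand_add (δ v : ℝ) :
    mixtureIntegrand k ζ (t + δ) v = mixtureIntegrand k ζ t v * exp (-δ / v) := by
  simp only [mixtureIntegrand, neg_add, add_div, exp_add]
  ring

lemma integrableOn_mixtureIntegrand {a : ℝ} (hζ : 0 < ζ) (ha : 0 < a) (ht : 0 ≤ t) :
    IntegrableOn (mixtureIntegrand k ζ t) (Ioi a) := by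
  have hcont : ContinuousOn (mixtureIntegrand k ζ t) (Ioi a) := fun v hv =>
    have hv0 : v ≠ 0 := (ha.trans hv).ne'
    ContinuousAt.continuousWithinAt (by unfold mixtureIntegrand; fun_prop (disch := positivity))
  refine ((exp_neg_integrableOn_Ioi a (inv_pos.2 hζ)).const_mul (a ^ k)⁻¹).mono'
    (hcont.aestronglyMeasurable measurableSet_Ioi) ?_
  filter_upwards [ae_restrict_mem measurableSet_Ioi] with v (hv : a < v)
  have hv0 : 0 < v := ha.trans hv
  have hpow : (v ^ k)⁻¹ ≤ (a ^ k)⁻¹ := inv_anti₀ (pow_pos ha k) (pow_le_pow_left₀ ha.le hv.le k)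
  have hexp : exp (-t / v) ≤ 1 := exp_le_one_iff.2 (div_nonpos_of_nonpos_of_nonneg (by linarith)
    hv0.le)
  rw [norm_of_nonneg (mixtureIntegrand_pos hv0).le, mixtureIntegrand,
    show -v / ζ = -ζ⁻¹ * v by ring]
  gcongr
  calc (v ^ k)⁻¹ * exp (-t / v) ≤ (a ^ k)⁻¹ * 1 := by gcongr
    _ = (a ^ k)⁻¹ := mul_one _

end mixtureIntegrand

lemma strictMonoOn_exp_neg_div {δ : ℝ} (hδ : 0 < δ) :
    StrictMonoOn (fun v => exp (-δ / v)) (Ioi 0) := fun u (hu : 0 < u) v _ huv => by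
  simp only [exp_lt_exp, neg_div, neg_lt_neg_iff]
  exact div_lt_div_of_pos_left hδ hu huv

section likelihoodRatio

variable {k : ℕ} {σw2 ζ s : ℝ}

lemma likelihoodRatio_pos (hσw2 : 0 < σw2) (hζ : 0 < ζ) (hs : 0 < s) {z : ℝ} (hz : 0 ≤ z) :
    0 < likelihoodRatio k σw2 ζ s z := by
  have hpos : ∀ a, 0 < a → 0 < ∫ v in Ioi a, mixtureIntegrand k ζ z v := fun a ha =>
    setIntegral_pos_of_forall_pos measurableSet_Ioi (by simp)
      (integrableOn_mixtureIntegrand hζ ha hz) fun v hv => mixtureIntegrand_pos (ha.trans hv)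
  have := hpos _ (add_pos hσw2 hs)
  have := hpos _ hσw2
  unfold likelihoodRatio
  positivity

lemma likelihoodRatio_strictMonoOn (hσw2 : 0 < σw2) (hζ : 0 < ζ) (hs : 0 < s) :
    StrictMonoOn (likelihoodRatio k σw2 ζ s) (Ici 0) := fun z (hz : 0 ≤ z) z' _ hzz' => by
  obtain ⟨δ, hδ, rfl⟩ : ∃ δ, 0 < δ ∧ z' = z + δ := ⟨z' - z, sub_pos.2 hzz', by ring⟩
  simp only [likelihoodRatio, mul_div_assoc, mixtureIntegrand_add]
  refine mul_lt_mul_of_pos_left ?_ (exp_pos _)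
  refine setIntegral_Ioi_div_lt_of_strictMonoOn (by linarith) (integrableOn_mixtureIntegrand hζ
    hσw2 hz) ?_ (fun v hv => mixtureIntegrand_pos (hσw2.trans hv)) (fun v _ => exp_pos _)
    ((strictMonoOn_exp_neg_div hδ).mono (Ioi_subset_Ioi hσw2.le))
  simpa only [← mixtureIntegrand_add] using
    integrableOn_mixtureIntegrand hζ hσw2 (by linarith : 0 ≤ z + δ)

end likelihoodRatio

theorem product_likelihood_ratio_shifts_strict_mono_each_coordinate_general
    (k M : ℕ)
    (σw2 ζ : ℝ) (hσw2 : 0 < σw2) (hζ : 0 < ζ)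
    (s : Fin M → ℝ) (hs : ∀ m, 0 < s m)
    (Λ : Fin M → ℝ → ℝ)
    (hΛ : ∀ (m : Fin M) (z : ℝ), Λ m z = Real.exp (s m / ζ) *
      (∫ v in Set.Ioi (σw2 + s m),
        (v ^ k)⁻¹ * Real.exp (-z / v) * Real.exp (-v / ζ)) /
      (∫ v in Set.Ioi σw2,
        (v ^ k)⁻¹ * Real.exp (-z / v) * Real.exp (-v / ζ))) :
    ∀ (z z' : Fin M → ℝ) (m : Fin M), (∀ i, 0 ≤ z i) → (∀ i, 0 ≤ z' i) →
      (∀ i, i ≠ m → z i = z' i) → z m < z' m →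
      ∏ i, Λ i (z i) < ∏ i, Λ i (z' i) := by
  intro z z' m hz hz' heq hlt
  have hΛ' : ∀ i t, Λ i t = likelihoodRatio k σw2 ζ (s i) t := hΛ
  simp only [hΛ']
  have hmono : ∀ i, likelihoodRatio k σw2 ζ (s i) (z i) ≤ likelihoodRatio k σw2 ζ (s i) (z' i) :=
    fun i => (likelihoodRatio_strictMonoOn hσw2 hζ (hs i)).monotoneOn (hz i) (hz' i)
      ((eq_or_ne i m).elim (fun h => h ▸ hlt.le) fun h => (heq i h).le)
  exact Finset.prod_lt_prod (fun i _ => likelihoodRatio_pos hσw2 hζ (hs i) (hz i))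
    (fun i _ => hmono i)
    ⟨m, Finset.mem_univ m, likelihoodRatio_strictMonoOn hσw2 hζ (hs m) (hz m) (hz' m) hlt⟩

/-- Corollary 4.1 (fading on both the jammer-to-Willie and Alice-to-Willie
channels, fading coefficients known to Willie): the product of
exponential-mixture likelihood ratios with block-dependent shifts `s m` is
strictly increasing in each coordinate of the per-block power vector. -/
theorem product_likelihood_ratio_shifts_strict_mono_each_coordinate
    (k M : ℕ) (hk : 1 ≤ k) (hM : 1 ≤ M)
    (σw2 ζ : ℝ) (hσw2 : 0 < σw2) (hζ : 0 < ζ)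
    (s : Fin M → ℝ) (hs : ∀ m, 0 < s m)
    (Λ : Fin M → ℝ → ℝ)
    (hΛ : ∀ (m : Fin M) (z : ℝ), Λ m z = Real.exp (s m / ζ) *
      (∫ v in Set.Ioi (σw2 + s m),
        (v ^ k)⁻¹ * Real.exp (-z / v) * Real.exp (-v / ζ)) /
      (∫ v in Set.Ioi σw2,
        (v ^ k)⁻¹ * Real.exp (-z / v) * Real.exp (-v / ζ))) :
    ∀ (z z' : Fin M → ℝ) (m : Fin M), (∀ i, 0 ≤ z i) → (∀ i, 0 ≤ z' i) →
      (∀ i, i ≠ m → z i = z' i) → z m < z' m →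
      ∏ i, Λ i (z i) < ∏ i, Λ i (z' i) :=
  product_likelihood_ratio_shifts_strict_mono_each_coordinate_general k M σw2 ζ hσw2 hζ s hs Λ hΛ
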